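/- Let p ∈ P_d and let q_1, …, q_m ∈ P_d (m ≥ 1) each have all entries strictly positive. Let M ∈ ℝ^d be the meet of the family {p, q_1, …, q_m}, defined componentwise by M_i = min over v ∈ {p, q_1, …, q_m} of (∑_{t=1}^i v_t) minus min over v ∈ {p, q_1, …, q_m} of (∑_{t=1}^{i−1} v_t), for i ∈ {1, …, d} (empty sums equal 0). Then min over l ∈ {1, …, d} of E_l(p)/E_l(M) equals min over j ∈ {1, …, m} of (min over l ∈ {1, …, d} of E_l(p)/E_l(q_j)). (The optimal probability of converting p into the optimal common resource of {p, q_1, …, q_m} equals the minimum over j of the optimal probability of converting p into q_j.) -/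
import Mathlib


open Finset

noncomputable section

/-- Prefix sum of the first `k` entries of `x` (1-based: `x_1 + ⋯ + x_k`). -/
def pfx (d : ℕ) (x : Fin d → ℝ) (k : ℕ) : ℝ :=
  ∑ i : Fin d, if (i : ℕ) < k then x i else 0

/-- Tail sum `E_l(x) = ∑_{i=l}^d x_i` for 1-based `l ∈ {1,…,d}`; `E_{d+1}(x) = 0`. -/
def Etail (d : ℕ) (x : Fin d → ℝ) (l : ℕ) : ℝ :=
  ∑ i : Fin d, if l ≤ (i : ℕ) + 1 then x i else 0

/-- Membership in `P_d`: decreasingly ordered, nonnegative, summing to 1. -/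
def memP (d : ℕ) (x : Fin d → ℝ) : Prop :=
  (∀ i j : Fin d, i ≤ j → x j ≤ x i) ∧ (∀ i, 0 ≤ x i) ∧ (∑ i, x i) = 1

/-- Majorization `x ≺ y`: all partial sums of `x` bounded by those of `y`, equal total sum. -/
def Maj (d : ℕ) (x y : Fin d → ℝ) : Prop :=
  (∀ k : ℕ, k < d → pfx d x k ≤ pfx d y k) ∧ pfx d x d = pfx d y d

/-- The meet `p ∧ q` of the majorization lattice, defined componentwise. -/
def meet (d : ℕ) (p q : Fin d → ℝ) : Fin d → ℝ :=
  fun i => min (pfx d p ((i : ℕ) + 1)) (pfx d q ((i : ℕ) + 1))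
         - min (pfx d p (i : ℕ)) (pfx d q (i : ℕ))

lemma pfx_zero (d : ℕ) (x : Fin d → ℝ) : pfx d x 0 = 0 := by simp [pfx]

lemma pfx_succ (d : ℕ) (x : Fin d → ℝ) (k : ℕ) (hk : k < d) :
    pfx d x (k+1) = pfx d x k + x ⟨k, hk⟩ := by
  unfold pfx
  have h : ∀ i : Fin d, (if (i : ℕ) < k + 1 then x i else 0)
      = (if (i : ℕ) < k then x i else 0) + (if i = ⟨k, hk⟩ then x i else 0) := by
    intro i
    rcases Nat.lt_trichotomy (i : ℕ) k with h | h | h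
    · have h2 : i ≠ ⟨k, hk⟩ := by simp [Fin.ext_iff]; omega
      simp [h, h2, Nat.lt_succ_of_lt h]
    · have h2 : i = ⟨k, hk⟩ := by simp [Fin.ext_iff, h]
      subst h2
      simp
    · have h2 : i ≠ ⟨k, hk⟩ := by simp [Fin.ext_iff]; omega
      simp [h2, Nat.not_lt.mpr h.le, show ¬(i : ℕ) < k + 1 by omega]
  rw [Finset.sum_congr rfl fun i _ => h i, Finset.sum_add_distrib,
    Finset.sum_ite_eq' Finset.univ (⟨k, hk⟩ : Fin d) x]
  simp

lemma pfx_total (d : ℕ) (x : Fin d → ℝ) : pfx d x d = ∑ i, x i := by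
  unfold pfx
  exact Finset.sum_congr rfl fun i _ => by simp [i.isLt]

lemma Etail_eq (d : ℕ) (x : Fin d → ℝ) (l : ℕ) (hl : 1 ≤ l) :
    Etail d x l = (∑ i, x i) - pfx d x (l - 1) := by
  have h : pfx d x (l - 1) + Etail d x l = ∑ i, x i := by
    unfold pfx Etail
    rw [← Finset.sum_add_distrib]
    refine Finset.sum_congr rfl fun i _ => ?_
    by_cases h1 : (i : ℕ) < l - 1 <;> by_cases h2 : l ≤ (i : ℕ) + 1 <;>
      simp_all <;> omega
  linarith

lemma Etail_one (d : ℕ) (x : Fin d → ℝ) : Etail d x 1 = ∑ i, x i := by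
  unfold Etail
  exact Finset.sum_congr rfl fun i _ => by simp

/-- Theorem 3 of the paper: the optimal probability of converting `p` into
the optimal common resource `M` of `{p, q_1, …, q_m}` equals the minimum over `j` of the
optimal probability of converting `p` into `q_j`. -/
theorem optimal_probability_to_family_meet (d : ℕ) (hd : 1 ≤ d) (m : ℕ) (hm : 1 ≤ m)
    (p : Fin d → ℝ) (q : Fin m → Fin d → ℝ)
    (hp : memP d p) (hq : ∀ j, memP d (q j)) (hqpos : ∀ j i, 0 < q j i)
    (M : Fin d → ℝ)
    (hM : ∀ i : Fin d,
      M i = min (pfx d p ((i : ℕ) + 1))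
              (Finset.univ.inf' (Finset.univ_nonempty_iff.mpr ⟨⟨0, hm⟩⟩)
                fun j : Fin m => pfx d (q j) ((i : ℕ) + 1))
          - min (pfx d p (i : ℕ))
              (Finset.univ.inf' (Finset.univ_nonempty_iff.mpr ⟨⟨0, hm⟩⟩)
                fun j : Fin m => pfx d (q j) (i : ℕ))) :
    ((Finset.Icc 1 d).inf' (Finset.nonempty_Icc.mpr hd)
        fun l => Etail d p l / Etail d M l)
      = Finset.univ.inf' (Finset.univ_nonempty_iff.mpr ⟨⟨0, hm⟩⟩)
          (fun j : Fin m =>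
            (Finset.Icc 1 d).inf' (Finset.nonempty_Icc.mpr hd)
              fun l => Etail d p l / Etail d (q j) l) := by
  have hne : (Finset.univ : Finset (Fin m)).Nonempty :=
    Finset.univ_nonempty_iff.mpr ⟨⟨0, hm⟩⟩
  have hneI : (Finset.Icc 1 d).Nonempty := Finset.nonempty_Icc.mpr hd
  set Q : ℕ → ℝ := fun k => Finset.univ.inf' hne fun j : Fin m => pfx d (q j) k with hQ
  -- partial sums of M
  have hpfxM : ∀ k, k ≤ d → pfx d M k = min (pfx d p k) (Q k) := by
    intro k
    induction k with
    | zero => intro _; simp [pfx_zero, hQ]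
    | succ n ih =>
      intro hn
      have hnd : n < d := hn
      rw [pfx_succ d M n hnd, ih hnd.le, hM ⟨n, hnd⟩]
      simp only [hQ]
      ring
  -- total sums
  have hsump : ∑ i, p i = 1 := hp.2.2
  have hsumq : ∀ j, ∑ i, q j i = 1 := fun j => (hq j).2.2
  -- tail sums
  have hEp : ∀ l, 1 ≤ l → Etail d p l = 1 - pfx d p (l - 1) := by
    intro l hl; rw [Etail_eq d p l hl, hsump]
  have hEq : ∀ j l, 1 ≤ l → Etail d (q j) l = 1 - pfx d (q j) (l - 1) := by
    intro j l hl; rw [Etail_eq d (q j) l hl, hsumq j]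
  have hEM : ∀ l, 1 ≤ l → l ≤ d →
      Etail d M l = 1 - min (pfx d p (l - 1)) (Q (l - 1)) := by
    intro l hl hld
    rw [Etail_eq d M l hl, ← pfx_total, hpfxM d le_rfl, hpfxM (l - 1) (by omega)]
    rw [pfx_total d p, hsump]
    have hQd : Q d = 1 := by
      have : (fun j : Fin m => pfx d (q j) d) = fun _ => (1 : ℝ) := by
        funext j; rw [pfx_total, hsumq]
      rw [hQ]
      simp only [this, Finset.inf'_const]
    rw [hQd]
    simp
  -- positivity of q tails
  have hEqpos : ∀ j l, l ∈ Finset.Icc 1 d → 0 < Etail d (q j) l := by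
    intro j l hl
    rw [Finset.mem_Icc] at hl
    unfold Etail
    apply Finset.sum_pos'
    · intro i _
      split
      · exact (hqpos j i).le
      · exact le_rfl
    · refine ⟨⟨d - 1, by omega⟩, Finset.mem_univ _, ?_⟩
      have : l ≤ (d - 1) + 1 := by omega
      simp only [this, if_pos]
      exact hqpos j _
  have hEpnn : ∀ l, 0 ≤ Etail d p l := by
    intro l
    unfold Etail
    apply Finset.sum_nonneg
    intro i _
    split
    · exact hp.2.1 i
    · exact le_rfl
  -- q tails are below M tail
  have hle : ∀ l, 1 ≤ l → l ≤ d → ∀ j, Etail d (q j) l ≤ Etail d M l := by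
    intro l hl hld j
    rw [hEM l hl hld, hEq j l hl]
    have h1 : Q (l - 1) ≤ pfx d (q j) (l - 1) :=
      Finset.inf'_le _ (Finset.mem_univ j)
    have h2 : min (pfx d p (l - 1)) (Q (l - 1)) ≤ Q (l - 1) := min_le_right _ _
    linarith
  -- M tail is attained
  have hattain : ∀ l, 1 ≤ l → l ≤ d →
      Etail d M l = Etail d p l ∨ ∃ j, Etail d M l = Etail d (q j) l := by
    intro l hl hld
    rw [hEM l hl hld, hEp l hl]
    rcases min_cases (pfx d p (l - 1)) (Q (l - 1)) with ⟨h, _⟩ | ⟨h, _⟩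
    · left; rw [h]
    · right
      obtain ⟨j, _, hj⟩ := Finset.exists_mem_eq_inf' hne
        (fun j : Fin m => pfx d (q j) (l - 1))
      refine ⟨j, ?_⟩
      rw [h]
      simp only [hQ]
      rw [hj, hEq j l hl]
  have h1mem : (1 : ℕ) ∈ Finset.Icc 1 d := Finset.mem_Icc.mpr ⟨le_rfl, hd⟩
  set j0 : Fin m := ⟨0, hm⟩ with hj0
  -- RHS ≤ 1
  have hRHS_le_one : (Finset.univ.inf' hne
      (fun j : Fin m => (Finset.Icc 1 d).inf' hneI
        fun l => Etail d p l / Etail d (q j) l)) ≤ 1 := by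
    refine le_trans (Finset.inf'_le _ (Finset.mem_univ j0)) ?_
    refine le_trans (Finset.inf'_le _ h1mem) ?_
    rw [Etail_one, Etail_one, hsump, hsumq]
    norm_num
  apply le_antisymm
  · -- LHS ≤ RHS
    apply Finset.le_inf'
    intro j _
    apply Finset.le_inf'
    intro l hl
    rw [Finset.mem_Icc] at hl
    refine le_trans (Finset.inf'_le _ (Finset.mem_Icc.mpr hl)) ?_
    gcongr
    · exact hEpnn l
    · exact hEqpos j l (Finset.mem_Icc.mpr hl)
    · exact hle l hl.1 hl.2 j
  · -- RHS ≤ LHS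
    apply Finset.le_inf'
    intro l hl
    have hl' := Finset.mem_Icc.mp hl
    rcases hattain l hl'.1 hl'.2 with h | ⟨j, h⟩
    · rw [h]
      by_cases h0 : Etail d p l = 0
      · rw [h0]
        simp only [zero_div]
        refine le_trans (Finset.inf'_le _ (Finset.mem_univ j0)) ?_
        refine le_trans (Finset.inf'_le _ hl) ?_
        rw [h0, zero_div]
      · rw [div_self h0]
        exact hRHS_le_one
    · rw [h]
      refine le_trans (Finset.inf'_le _ (Finset.mem_univ j)) ?_
      exact Finset.inf'_le _ hl

end
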